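/- arXiv:1010.1220 — 2 statements merged into one kernel-verified Lean document; each statement's English description precedes it below -/
import Mathlib

section
/- Let G be an undirected graph on vertex set {1,…,n} with positive vertex weights c_i, let J > 0 be a constant coupling, let d_i denote the degree of vertex i, and let k > 0 be a scaling factor such that kJ > min{c_i, c_j} for every edge ij. Define the scaled Ising energy E_k(s) = Σ_{i∈V(G)} (J d_i − 2 c_i / k) s_i + J Σ_{ij∈E(G)} s_i s_j for s ∈ {−1,1}^n. Then s* ∈ {−1,1}^n minimizes E_k over {−1,1}^n if and only if {i ∈ V(G) : s*_i = 1} is a maximum-weight independent set of G with respect to the (unscaled) weights c_i. In particular, the set of minimizers of E_k is the same for every such k. -/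
open Finset

/-- The set of (ordered, increasing) edge pairs of `G`. -/
def edgePairs {n : ℕ} (G : SimpleGraph (Fin n)) [DecidableRel G.Adj] :
    Finset (Fin n × Fin n) :=
  Finset.univ.filter (fun p => p.1 < p.2 ∧ G.Adj p.1 p.2)

/-- `S` is an independent set of `G`. -/
def IsIndep {n : ℕ} (G : SimpleGraph (Fin n)) (S : Finset (Fin n)) : Prop :=
  ∀ i ∈ S, ∀ j ∈ S, ¬ G.Adj i j

/-- The scaled Ising energy
`E_k(s) = Σ_i (J d_i − 2 c_i / k) s_i + J Σ_{ij∈E} s_i s_j`. -/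
noncomputable def IsingEk {n : ℕ} (G : SimpleGraph (Fin n)) [DecidableRel G.Adj]
    (c : Fin n → ℝ) (J k : ℝ) (s : Fin n → ℝ) : ℝ :=
  (∑ i, (J * (G.degree i : ℝ) - 2 * c i / k) * s i)
    + J * ∑ p ∈ edgePairs G, s p.1 * s p.2

/-!
Writing a spin vector as `s = 2x - 1` with `x` the indicator of `S = {i | s i = 1}` turns the
Ising energy into `const - (4 / k) (w(S) - kJ e(S))`, where `w(S)` is the weight of `S` and
`e(S)` the number of edges inside `S`. So the minimizers of `E_k` are the maximizers of this
penalized weight. If `S` contains an edge `ij` with `c_i < kJ`, deleting `i` loses `c_i` but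
saves at least `kJ`; hence every maximizer is independent, and every set is dominated by an
independent one. On independent sets the penalized weight is the weight itself.
-/

section

variable {n : ℕ} {G : SimpleGraph (Fin n)} [DecidableRel G.Adj]

lemma mem_edgePairs {p : Fin n × Fin n} : p ∈ edgePairs G ↔ p.1 < p.2 ∧ G.Adj p.1 p.2 := by
  simp [edgePairs]

lemma SimpleGraph.Adj.mem_edgePairs_or {i j : Fin n} (h : G.Adj i j) :
    (i, j) ∈ edgePairs G ∨ (j, i) ∈ edgePairs G := by
  simp only [mem_edgePairs]
  rcases (G.ne_of_adj h).lt_or_gt with hij | hji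
  · exact .inl ⟨hij, h⟩
  · exact .inr ⟨hji, h.symm⟩

lemma sum_adj_eq_sum_edgePairs {M : Type*} [AddCommMonoid M] (f : Fin n × Fin n → M) :
    ∑ p with G.Adj p.1 p.2, f p = ∑ p ∈ edgePairs G, (f p + f p.swap) := by
  have split (p : Fin n × Fin n) : (if G.Adj p.1 p.2 then f p else 0) =
      (if p ∈ edgePairs G then f p else 0) + (if p.swap ∈ edgePairs G then f p else 0) := by
    simp only [mem_edgePairs, Prod.fst_swap, Prod.snd_swap, G.adj_comm p.2]
    by_cases hadj : G.Adj p.1 p.2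
    · rcases lt_trichotomy p.1 p.2 with h | h | h
      · simp [hadj, h, h.not_gt]
      · exact absurd hadj (h ▸ G.irrefl)
      · simp [hadj, h, h.not_gt]
    · simp [hadj]
  have swap_sum : ∑ p, (if p.swap ∈ edgePairs G then f p else 0) =
      ∑ p, (if p ∈ edgePairs G then f p.swap else 0) :=
    ((Equiv.prodComm _ _).sum_comp _).symm
  rw [sum_filter, Fintype.sum_congr _ _ split, sum_add_distrib, swap_sum, ← sum_filter,
    ← sum_filter, filter_univ_mem, sum_add_distrib]

lemma sum_degree_mul (g : Fin n → ℝ) :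
    ∑ i, (G.degree i : ℝ) * g i = ∑ p ∈ edgePairs G, (g p.1 + g p.2) := by
  have h (i : Fin n) : (G.degree i : ℝ) * g i = ∑ j, if G.Adj i j then g i else 0 := by
    rw [← sum_filter, sum_const, ← G.neighborFinset_eq_filter, G.card_neighborFinset_eq_degree,
      nsmul_eq_mul]
  simp_rw [h]
  rw [← Fintype.sum_prod_type (fun p => if G.Adj p.1 p.2 then g p.1 else 0), ← sum_filter,
    sum_adj_eq_sum_edgePairs]
  rfl

lemma card_edgePairs_mul_two : ((edgePairs G).card : ℝ) * 2 = ∑ i, (G.degree i : ℝ) := by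
  simpa [mul_two] using (sum_degree_mul (G := G) fun _ => 1).symm

lemma isingEk_two_mul_sub_one (c : Fin n → ℝ) (J k : ℝ) (x : Fin n → ℝ) :
    IsingEk G c J k (fun i => 2 * x i - 1) =
      2 / k * ∑ i, c i - J * (edgePairs G).card
        - 4 / k * ∑ i, c i * x i + 4 * J * ∑ p ∈ edgePairs G, x p.1 * x p.2 := by
  have linear : ∑ i, (J * (G.degree i : ℝ) - 2 * c i / k) * (2 * x i - 1) =
      2 * J * ∑ i, (G.degree i : ℝ) * x i - J * ∑ i, (G.degree i : ℝ)
        - 4 / k * ∑ i, c i * x i + 2 / k * ∑ i, c i := by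
    simp only [mul_sum, ← sum_sub_distrib, ← sum_add_distrib]
    exact sum_congr rfl fun i _ => by ring
  have quadratic : ∑ p ∈ edgePairs G, (2 * x p.1 - 1) * (2 * x p.2 - 1) =
      4 * ∑ p ∈ edgePairs G, x p.1 * x p.2 - 2 * ∑ p ∈ edgePairs G, (x p.1 + x p.2)
        + (edgePairs G).card := by
    simp only [mul_sum, card_eq_sum_ones, Nat.cast_sum, Nat.cast_one, ← sum_sub_distrib,
      ← sum_add_distrib]
    exact sum_congr rfl fun p _ => by ring
  rw [IsingEk, linear, quadratic, sum_degree_mul, ← card_edgePairs_mul_two]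
  ring

def edgesWithin (G : SimpleGraph (Fin n)) [DecidableRel G.Adj] (S : Finset (Fin n)) :
    Finset (Fin n × Fin n) :=
  (edgePairs G).filter fun p => p.1 ∈ S ∧ p.2 ∈ S

lemma IsIndep.edgesWithin_eq_empty {S : Finset (Fin n)} (h : IsIndep G S) :
    edgesWithin G S = ∅ :=
  filter_eq_empty_iff.mpr fun p hp hpS => h p.1 hpS.1 p.2 hpS.2 (mem_edgePairs.mp hp).2

lemma card_edgesWithin_erase_lt {S : Finset (Fin n)} {i j : Fin n} (hi : i ∈ S) (hj : j ∈ S)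
    (hij : G.Adj i j) : (edgesWithin G (S.erase i)).card < (edgesWithin G S).card := by
  have hsub : edgesWithin G (S.erase i) ⊆ edgesWithin G S := fun p hp => by
    simp only [edgesWithin, mem_filter] at hp ⊢
    exact ⟨hp.1, mem_of_mem_erase hp.2.1, mem_of_mem_erase hp.2.2⟩
  refine card_lt_card ((ssubset_iff_of_subset hsub).mpr ?_)
  simp only [edgesWithin, mem_filter, mem_erase, not_and]
  rcases hij.mem_edgePairs_or with h | h
  · exact ⟨(i, j), ⟨h, hi, hj⟩, fun _ hi' => (hi'.1 rfl).elim⟩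
  · exact ⟨(j, i), ⟨h, hj, hi⟩, fun _ _ hi' => (hi' rfl).elim⟩

noncomputable def penalizedWeight (G : SimpleGraph (Fin n)) [DecidableRel G.Adj]
    (c : Fin n → ℝ) (ρ : ℝ) (S : Finset (Fin n)) : ℝ :=
  ∑ i ∈ S, c i - ρ * (edgesWithin G S).card

section penalizedWeight

variable {c : Fin n → ℝ} {ρ : ℝ}

lemma IsIndep.penalizedWeight_eq {S : Finset (Fin n)} (h : IsIndep G S) :
    penalizedWeight G c ρ S = ∑ i ∈ S, c i := by
  simp [penalizedWeight, h.edgesWithin_eq_empty]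

lemma penalizedWeight_lt_erase (hρ : 0 ≤ ρ) {S : Finset (Fin n)} {i j : Fin n} (hi : i ∈ S)
    (hj : j ∈ S) (hij : G.Adj i j) (hci : c i < ρ) :
    penalizedWeight G c ρ S < penalizedWeight G c ρ (S.erase i) := by
  have hcard : ((edgesWithin G (S.erase i)).card : ℝ) + 1 ≤ (edgesWithin G S).card := by
    exact_mod_cast card_edgesWithin_erase_lt hi hj hij
  have hpenalty := mul_le_mul_of_nonneg_left hcard hρ
  rw [penalizedWeight, penalizedWeight, ← sum_erase_add S c hi]
  linarith

lemma exists_penalizedWeight_lt_erase (hρ : 0 ≤ ρ)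
    (hcρ : ∀ i j, G.Adj i j → min (c i) (c j) < ρ) {S : Finset (Fin n)}
    (hS : ¬ IsIndep G S) :
    ∃ i ∈ S, penalizedWeight G c ρ S < penalizedWeight G c ρ (S.erase i) := by
  simp only [IsIndep, not_forall, not_not] at hS
  obtain ⟨i, hi, j, hj, hij⟩ := hS
  rcases min_lt_iff.mp (hcρ i j hij) with hci | hcj
  · exact ⟨i, hi, penalizedWeight_lt_erase hρ hi hj hij hci⟩
  · exact ⟨j, hj, penalizedWeight_lt_erase hρ hj hi hij.symm hcj⟩

lemma exists_isIndep_penalizedWeight_le (hρ : 0 ≤ ρ)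
    (hcρ : ∀ i j, G.Adj i j → min (c i) (c j) < ρ) (S : Finset (Fin n)) :
    ∃ T, IsIndep G T ∧ penalizedWeight G c ρ S ≤ ∑ i ∈ T, c i := by
  induction S using Finset.strongInduction with
  | _ S ih =>
    by_cases hS : IsIndep G S
    · exact ⟨S, hS, hS.penalizedWeight_eq.le⟩
    · obtain ⟨i, hi, hlt⟩ := exists_penalizedWeight_lt_erase hρ hcρ hS
      obtain ⟨T, hT, hle⟩ := ih (S.erase i) (erase_ssubset hi)
      exact ⟨T, hT, hlt.le.trans hle⟩

theorem penalizedWeight_isMax_iff (hρ : 0 ≤ ρ)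
    (hcρ : ∀ i j, G.Adj i j → min (c i) (c j) < ρ) (S : Finset (Fin n)) :
    (∀ T, penalizedWeight G c ρ T ≤ penalizedWeight G c ρ S) ↔
      IsIndep G S ∧ ∀ T, IsIndep G T → ∑ i ∈ T, c i ≤ ∑ i ∈ S, c i := by
  constructor
  · intro hmax
    have hS : IsIndep G S := by
      by_contra hS
      obtain ⟨i, -, hlt⟩ := exists_penalizedWeight_lt_erase hρ hcρ hS
      exact (hmax _).not_gt hlt
    refine ⟨hS, fun T hT => ?_⟩
    simpa [hT.penalizedWeight_eq, hS.penalizedWeight_eq] using hmax T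
  · rintro ⟨hS, hmax⟩ T
    obtain ⟨T', hT', hle⟩ := exists_isIndep_penalizedWeight_le hρ hcρ T
    calc penalizedWeight G c ρ T ≤ ∑ i ∈ T', c i := hle
      _ ≤ ∑ i ∈ S, c i := hmax T' hT'
      _ = penalizedWeight G c ρ S := hS.penalizedWeight_eq.symm

end penalizedWeight

def spinOf (S : Finset (Fin n)) : Fin n → ℝ := fun i => if i ∈ S then 1 else -1

lemma spinOf_eq_neg_one_or_eq_one (S : Finset (Fin n)) (i : Fin n) :
    spinOf S i = -1 ∨ spinOf S i = 1 := by
  unfold spinOf; split_ifs <;> simp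

lemma spinOf_filter_eq_one {s : Fin n → ℝ} (hs : ∀ i, s i = -1 ∨ s i = 1) :
    spinOf (univ.filter fun i => s i = 1) = s := by
  funext i
  rcases hs i with h | h <;> norm_num [spinOf, h]

section spinOf

variable (c : Fin n → ℝ) (J : ℝ) {k : ℝ}

lemma isingEk_spinOf (hk : k ≠ 0) (S : Finset (Fin n)) :
    IsingEk G c J k (spinOf S) =
      2 / k * ∑ i, c i - J * (edgePairs G).card - 4 / k * penalizedWeight G c (k * J) S := by
  have hspin : spinOf S = fun i => 2 * (if i ∈ S then 1 else 0) - 1 := by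
    funext i; unfold spinOf; split_ifs <;> norm_num
  have hweight : ∑ i, c i * (if i ∈ S then 1 else 0) = ∑ i ∈ S, c i := by
    simp only [mul_ite, mul_one, mul_zero, sum_ite_mem, univ_inter]
  have hedges : ∑ p ∈ edgePairs G, (if p.1 ∈ S then 1 else 0) * (if p.2 ∈ S then 1 else 0) =
      ((edgesWithin G S).card : ℝ) := by
    simp only [ite_zero_mul_ite_zero, mul_one, sum_boole]
    rfl
  rw [hspin, isingEk_two_mul_sub_one, hweight, hedges, penalizedWeight]
  field_simp
  ring

lemma isingEk_spinOf_le_iff (hk : 0 < k) (S T : Finset (Fin n)) :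
    IsingEk G c J k (spinOf S) ≤ IsingEk G c J k (spinOf T) ↔
      penalizedWeight G c (k * J) T ≤ penalizedWeight G c (k * J) S := by
  rw [isingEk_spinOf c J hk.ne', isingEk_spinOf c J hk.ne', sub_le_sub_iff_left,
    mul_le_mul_iff_of_pos_left (by positivity)]

lemma isingEk_isMin_iff (hk : 0 < k) {s : Fin n → ℝ} (hs : ∀ i, s i = -1 ∨ s i = 1) :
    (∀ s' : Fin n → ℝ, (∀ i, s' i = -1 ∨ s' i = 1) →
        IsingEk G c J k s ≤ IsingEk G c J k s') ↔
      ∀ T, penalizedWeight G c (k * J) T ≤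
        penalizedWeight G c (k * J) (univ.filter fun i => s i = 1) := by
  set S := univ.filter fun i => s i = 1
  have hsS : spinOf S = s := spinOf_filter_eq_one hs
  rw [← hsS]
  refine ⟨fun h T => (isingEk_spinOf_le_iff c J hk S T).mp (h _ (spinOf_eq_neg_one_or_eq_one T)),
    fun h s' hs' => ?_⟩
  rw [← spinOf_filter_eq_one hs']
  exact (isingEk_spinOf_le_iff c J hk _ _).mpr (h _)

end spinOf

theorem isingEk_isMin_iff_isMaxWeightIndep {c : Fin n → ℝ} {J k : ℝ} (hJ : 0 < J) (hk : 0 < k)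
    (hckJ : ∀ i j, G.Adj i j → min (c i) (c j) < k * J) {s : Fin n → ℝ}
    (hs : ∀ i, s i = -1 ∨ s i = 1) :
    (∀ s' : Fin n → ℝ, (∀ i, s' i = -1 ∨ s' i = 1) →
        IsingEk G c J k s ≤ IsingEk G c J k s') ↔
      IsIndep G (univ.filter fun i => s i = 1) ∧
        ∀ S : Finset (Fin n), IsIndep G S →
          ∑ i ∈ S, c i ≤ ∑ i ∈ univ.filter (fun i => s i = 1), c i :=
  (isingEk_isMin_iff c J hk hs).trans
    (penalizedWeight_isMax_iff (mul_pos hk hJ).le hckJ _)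

end

theorem stmt6_general {n : ℕ} (G : SimpleGraph (Fin n)) [DecidableRel G.Adj]
    (c : Fin n → ℝ) (J : ℝ)
    (hJ : 0 < J) :
    (∀ k : ℝ, 0 < k → (∀ i j, G.Adj i j → min (c i) (c j) < k * J) →
      ∀ s : Fin n → ℝ, (∀ i, s i = -1 ∨ s i = 1) →
        ((∀ s' : Fin n → ℝ, (∀ i, s' i = -1 ∨ s' i = 1) →
            IsingEk G c J k s ≤ IsingEk G c J k s') ↔
         (IsIndep G (Finset.univ.filter (fun i => s i = 1)) ∧
          ∀ S : Finset (Fin n), IsIndep G S →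
            ∑ i ∈ S, c i ≤ ∑ i ∈ Finset.univ.filter (fun i => s i = 1), c i))) ∧
    (∀ k₁ k₂ : ℝ, 0 < k₁ → 0 < k₂ →
      (∀ i j, G.Adj i j → min (c i) (c j) < k₁ * J) →
      (∀ i j, G.Adj i j → min (c i) (c j) < k₂ * J) →
      {s : Fin n → ℝ | (∀ i, s i = -1 ∨ s i = 1) ∧
          ∀ s' : Fin n → ℝ, (∀ i, s' i = -1 ∨ s' i = 1) →
            IsingEk G c J k₁ s ≤ IsingEk G c J k₁ s'} =
      {s : Fin n → ℝ | (∀ i, s i = -1 ∨ s i = 1) ∧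
          ∀ s' : Fin n → ℝ, (∀ i, s' i = -1 ∨ s' i = 1) →
            IsingEk G c J k₂ s ≤ IsingEk G c J k₂ s'}) :=
  ⟨fun _ hk hckJ _ hs => isingEk_isMin_iff_isMaxWeightIndep hJ hk hckJ hs,
    fun _ _ hk₁ hk₂ hck₁J hck₂J => Set.ext fun _ => and_congr_right fun hs =>
      (isingEk_isMin_iff_isMaxWeightIndep hJ hk₁ hck₁J hs).trans
        (isingEk_isMin_iff_isMaxWeightIndep hJ hk₂ hck₂J hs).symm⟩

theorem stmt6 {n : ℕ} (G : SimpleGraph (Fin n)) [DecidableRel G.Adj]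
    (c : Fin n → ℝ) (J : ℝ)
    (hc : ∀ i, 0 < c i) (hJ : 0 < J) :
    (∀ k : ℝ, 0 < k → (∀ i j, G.Adj i j → min (c i) (c j) < k * J) →
      ∀ s : Fin n → ℝ, (∀ i, s i = -1 ∨ s i = 1) →
        ((∀ s' : Fin n → ℝ, (∀ i, s' i = -1 ∨ s' i = 1) →
            IsingEk G c J k s ≤ IsingEk G c J k s') ↔
         (IsIndep G (Finset.univ.filter (fun i => s i = 1)) ∧
          ∀ S : Finset (Fin n), IsIndep G S →
            ∑ i ∈ S, c i ≤ ∑ i ∈ Finset.univ.filter (fun i => s i = 1), c i))) ∧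
    (∀ k₁ k₂ : ℝ, 0 < k₁ → 0 < k₂ →
      (∀ i j, G.Adj i j → min (c i) (c j) < k₁ * J) →
      (∀ i j, G.Adj i j → min (c i) (c j) < k₂ * J) →
      {s : Fin n → ℝ | (∀ i, s i = -1 ∨ s i = 1) ∧
          ∀ s' : Fin n → ℝ, (∀ i, s' i = -1 ∨ s' i = 1) →
            IsingEk G c J k₁ s ≤ IsingEk G c J k₁ s'} =
      {s : Fin n → ℝ | (∀ i, s i = -1 ∨ s i = 1) ∧
          ∀ s' : Fin n → ℝ, (∀ i, s' i = -1 ∨ s' i = 1) →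
            IsingEk G c J k₂ s ≤ IsingEk G c J k₂ s'}) :=
  stmt6_general G c J hJ
end

section
/- In the CK graph CK(r, g) with g ≥ 2, the maximal independent sets are exactly the following: (1) V_A; (2) for each function f : {1,…,g} → {1,…,r}, the set S_f consisting of the f(k)-th vertex of clique k of V_B for each k (r^g sets in total); and (3) for each k ∈ {1,…,g} and each vertex v of clique k of V_B, the set consisting of both vertices of group k of V_A together with v (g·r sets in total). -/
open Finset

/-- Vertex type of the CK graph `CK(r,g)`: `V_A` = `g` groups of 2 vertices (left),
`V_B` = `g` cliques of `r` vertices (right). -/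
abbrev CKV (r g : ℕ) := (Fin g × Fin 2) ⊕ (Fin g × Fin r)

/-- The CK graph `CK(r,g)`: no edges inside `V_A`; each `r`-clique of `V_B` is complete;
a vertex of group `k` of `V_A` is adjacent to every vertex of every clique of `V_B`
except clique `k`; no edges between distinct cliques of `V_B`. -/
def CKGraph (r g : ℕ) : SimpleGraph (CKV r g) where
  Adj u v :=
    match u, v with
    | Sum.inl _, Sum.inl _ => False
    | Sum.inl a, Sum.inr b => a.1 ≠ b.1
    | Sum.inr a, Sum.inl b => b.1 ≠ a.1
    | Sum.inr a, Sum.inr b => a.1 = b.1 ∧ a.2 ≠ b.2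
  symm := by
    constructor
    rintro (⟨k, a⟩ | ⟨k, a⟩) (⟨l, b⟩ | ⟨l, b⟩) h
    · exact h
    · exact h
    · exact h
    · exact ⟨h.1.symm, h.2.symm⟩
  loopless := by
    constructor
    rintro (⟨k, a⟩ | ⟨k, a⟩) h
    · exact h
    · exact h.2 rfl

/-- `S` is an independent set of `CK(r,g)`. -/
def CKIndep {r g : ℕ} (S : Finset (CKV r g)) : Prop :=
  ∀ u ∈ S, ∀ v ∈ S, ¬ (CKGraph r g).Adj u v

/-- `S` is a maximal independent set of `CK(r,g)`. -/
def CKMaxIndep {r g : ℕ} (S : Finset (CKV r g)) : Prop :=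
  CKIndep S ∧ ∀ v : CKV r g, CKIndep (insert v S) → v ∈ S

/-- The total weight of `S`, where `V_A`-vertices weigh `wA` and `V_B`-vertices weigh `wB`. -/
def CKwt {r g : ℕ} (wA wB : ℝ) (S : Finset (CKV r g)) : ℝ :=
  ∑ v ∈ S, Sum.elim (fun _ => wA) (fun _ => wB) v

/-- The set `V_A` of the CK graph, as a `Finset`. -/
def VA (r g : ℕ) : Finset (CKV r g) :=
  (Finset.univ : Finset (Fin g × Fin 2)).image Sum.inl

/-- For `f : Fin g → Fin r`, the selection `S_f` consisting of the `f k`-th vertex of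
clique `k` of `V_B`, for each `k`. -/
def Sf {r g : ℕ} (f : Fin g → Fin r) : Finset (CKV r g) :=
  (Finset.univ : Finset (Fin g)).image (fun k => Sum.inr (k, f k))

/-! A maximal independent set that avoids `V_B` is `V_A`. One that avoids `V_A` meets every clique
of `V_B` (an empty clique could be extended) in exactly one vertex. One that contains `inl (l, a)`
and `inr (k, v)` forces `l = k`, has no other vertex of `V_B` than `inr (k, v)`, and then admits
both vertices of group `k`. Conversely, since `g ≥ 2`, every vertex outside one of these three
kinds of sets has a neighbour in it. -/

namespace CKGraph

variable {r g : ℕ}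

@[simp]
lemma adj_inl_inl (a b : Fin g × Fin 2) : ¬ (CKGraph r g).Adj (Sum.inl a) (Sum.inl b) :=
  fun h => h

@[simp]
lemma adj_inl_inr (k l : Fin g) (a : Fin 2) (b : Fin r) :
    (CKGraph r g).Adj (Sum.inl (k, a)) (Sum.inr (l, b)) ↔ k ≠ l := Iff.rfl

@[simp]
lemma adj_inr_inl (k l : Fin g) (a : Fin r) (b : Fin 2) :
    (CKGraph r g).Adj (Sum.inr (k, a)) (Sum.inl (l, b)) ↔ l ≠ k := Iff.rfl

@[simp]
lemma adj_inr_inr (k l : Fin g) (a b : Fin r) :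
    (CKGraph r g).Adj (Sum.inr (k, a)) (Sum.inr (l, b)) ↔ k = l ∧ a ≠ b := Iff.rfl

end CKGraph

section

variable {r g : ℕ} {S : Finset (CKV r g)}

open CKGraph

lemma ckIndep_insert {v : CKV r g} :
    CKIndep (insert v S) ↔ CKIndep S ∧ ∀ u ∈ S, ¬ (CKGraph r g).Adj v u := by
  refine ⟨fun h => ⟨fun u hu w hw => h u (mem_insert_of_mem hu) w (mem_insert_of_mem hw),
    fun u hu => h v (mem_insert_self v S) u (mem_insert_of_mem hu)⟩, ?_⟩
  rintro ⟨hS, hv⟩ u hu w hw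
  rw [mem_insert] at hu hw
  rcases hu with rfl | hu <;> rcases hw with rfl | hw
  · exact (CKGraph r g).loopless.irrefl _
  · exact hv w hw
  · exact fun h => hv _ hu h.symm
  · exact hS _ hu _ hw

lemma ckMaxIndep_iff :
    CKMaxIndep S ↔ CKIndep S ∧ ∀ v ∉ S, ∃ u ∈ S, (CKGraph r g).Adj v u := by
  simp only [CKMaxIndep, ckIndep_insert]
  refine and_congr_right fun hS => forall_congr' fun v => ?_
  constructor
  · intro h hv
    by_contra! hadj
    exact hv (h ⟨hS, hadj⟩)
  · intro h ⟨_, hadj⟩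
    by_contra hv
    obtain ⟨u, hu, huv⟩ := h hv
    exact hadj u hu huv

lemma CKMaxIndep.mem_of_forall_not_adj (hS : CKMaxIndep S) {v : CKV r g}
    (hv : ∀ u ∈ S, ¬ (CKGraph r g).Adj v u) : v ∈ S :=
  hS.2 v (ckIndep_insert.mpr ⟨hS.1, hv⟩)

@[simp]
lemma inl_mem_VA (x : Fin g × Fin 2) : (Sum.inl x : CKV r g) ∈ VA r g := by
  simp [VA]

@[simp]
lemma inr_notMem_VA (x : Fin g × Fin r) : (Sum.inr x : CKV r g) ∉ VA r g := by
  simp [VA]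

@[simp]
lemma inl_notMem_Sf (f : Fin g → Fin r) (x : Fin g × Fin 2) : (Sum.inl x : CKV r g) ∉ Sf f := by
  simp [Sf]

@[simp]
lemma inr_mem_Sf (f : Fin g → Fin r) (k : Fin g) (v : Fin r) :
    (Sum.inr (k, v) : CKV r g) ∈ Sf f ↔ v = f k := by
  simp [Sf, eq_comm]

lemma eq_VA_of_ckMaxIndep (hS : CKMaxIndep S) (hB : ∀ x, Sum.inr x ∉ S) : S = VA r g := by
  ext (x | x)
  · simp only [inl_mem_VA, iff_true]
    refine hS.mem_of_forall_not_adj fun u hu => ?_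
    rcases u with u | u
    · exact adj_inl_inl x u
    · exact absurd hu (hB u)
  · simpa using hB x

lemma exists_eq_Sf_of_ckMaxIndep (hS : CKMaxIndep S) (hA : ∀ x, Sum.inl x ∉ S)
    (v : Fin r) : ∃ f : Fin g → Fin r, S = Sf f := by
  have hclique : ∀ m, ∃ w, Sum.inr (m, w) ∈ S := by
    intro m
    by_contra! hm
    refine hm v (hS.mem_of_forall_not_adj fun u hu => ?_)
    rcases u with u | ⟨m', w⟩
    · exact absurd hu (hA u)
    · rw [adj_inr_inr]
      rintro ⟨rfl, -⟩
      exact hm w hu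
  choose f hf using hclique
  refine ⟨f, ?_⟩
  ext (x | ⟨m, w⟩)
  · simpa using hA x
  · rw [inr_mem_Sf]
    refine ⟨fun hw => ?_, fun hw => hw ▸ hf m⟩
    by_contra hne
    exact hS.1 _ hw _ (hf m) ((adj_inr_inr _ _ _ _).mpr ⟨rfl, hne⟩)

lemma eq_triple_of_ckMaxIndep (hS : CKMaxIndep S) {l k : Fin g} {a : Fin 2} {v : Fin r}
    (hla : Sum.inl (l, a) ∈ S) (hkv : Sum.inr (k, v) ∈ S) :
    S = {Sum.inl (k, 0), Sum.inl (k, 1), Sum.inr (k, v)} := by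
  have hl : l = k := not_not.mp (hS.1 _ hla _ hkv)
  subst hl
  have hA : ∀ m c, Sum.inl (m, c) ∈ S → m = l := fun m c h => not_not.mp (hS.1 _ h _ hkv)
  have hB : ∀ m w, Sum.inr (m, w) ∈ S → m = l ∧ w = v := by
    intro m w h
    obtain rfl : m = l := (not_not.mp (hS.1 _ h _ hla)).symm
    simpa using hS.1 _ h _ hkv
  have hAl : ∀ c, Sum.inl (l, c) ∈ S := fun c =>
    hS.mem_of_forall_not_adj fun u hu => by
      rcases u with u | ⟨m, w⟩
      · exact adj_inl_inl _ u
      · simpa using (hB m w hu).1.symm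
  ext (⟨m, c⟩ | ⟨m, w⟩)
  · simp only [mem_insert, mem_singleton, Sum.inl.injEq, Prod.mk.injEq, reduceCtorEq, or_false]
    refine ⟨fun h => ?_, ?_⟩
    · obtain rfl := hA m c h
      fin_cases c <;> simp
    · rintro (⟨rfl, rfl⟩ | ⟨rfl, rfl⟩) <;> exact hAl _
  · simp only [mem_insert, mem_singleton, Sum.inr.injEq, Prod.mk.injEq, reduceCtorEq, false_or]
    exact ⟨hB m w, fun ⟨hm, hw⟩ => hm ▸ hw ▸ hkv⟩

lemma ckMaxIndep_VA (hg : 2 ≤ g) : CKMaxIndep (VA r g) := by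
  have := Fin.nontrivial_iff_two_le.mpr hg
  refine ckMaxIndep_iff.mpr ⟨fun u hu w hw => ?_, fun x hx => ?_⟩
  · obtain ⟨a, -, rfl⟩ := mem_image.mp hu
    obtain ⟨b, -, rfl⟩ := mem_image.mp hw
    exact adj_inl_inl a b
  · rcases x with x | ⟨m, w⟩
    · exact absurd (inl_mem_VA x) hx
    · obtain ⟨l, hl⟩ := exists_ne m
      exact ⟨Sum.inl (l, 0), inl_mem_VA _, (adj_inr_inl _ _ _ _).mpr hl⟩

lemma ckMaxIndep_Sf (hg : 2 ≤ g) (f : Fin g → Fin r) : CKMaxIndep (Sf f) := by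
  have := Fin.nontrivial_iff_two_le.mpr hg
  refine ckMaxIndep_iff.mpr ⟨fun u hu w hw => ?_, fun x hx => ?_⟩
  · obtain ⟨k, -, rfl⟩ := mem_image.mp hu
    obtain ⟨l, -, rfl⟩ := mem_image.mp hw
    rw [adj_inr_inr]
    rintro ⟨rfl, hne⟩
    exact hne rfl
  · rcases x with ⟨m, c⟩ | ⟨m, w⟩
    · obtain ⟨l, hl⟩ := exists_ne m
      exact ⟨Sum.inr (l, f l), (inr_mem_Sf f l _).mpr rfl, (adj_inl_inr _ _ _ _).mpr hl.symm⟩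
    · refine ⟨Sum.inr (m, f m), (inr_mem_Sf f m _).mpr rfl, (adj_inr_inr _ _ _ _).mpr ⟨rfl, ?_⟩⟩
      exact fun hw => hx ((inr_mem_Sf f m w).mpr hw)

lemma ckMaxIndep_triple (k : Fin g) (v : Fin r) :
    CKMaxIndep ({Sum.inl (k, 0), Sum.inl (k, 1), Sum.inr (k, v)} : Finset (CKV r g)) := by
  refine ckMaxIndep_iff.mpr ⟨fun u hu w hw => ?_, fun x hx => ?_⟩
  · simp only [mem_insert, mem_singleton] at hu hw
    rcases hu with rfl | rfl | rfl <;> rcases hw with rfl | rfl | rfl <;> simp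
  · simp only [mem_insert, mem_singleton, not_or] at hx
    rcases x with ⟨m, c⟩ | ⟨m, w⟩
    · have hm : m ≠ k := by
        rintro rfl
        fin_cases c <;> simp_all
      exact ⟨Sum.inr (k, v), by simp, (adj_inl_inr _ _ _ _).mpr hm⟩
    · by_cases hm : m = k
      · subst hm
        refine ⟨Sum.inr (m, v), by simp, (adj_inr_inr _ _ _ _).mpr ⟨rfl, ?_⟩⟩
        rintro rfl
        exact hx.2.2 rfl
      · exact ⟨Sum.inl (k, 0), by simp, (adj_inr_inl _ _ _ _).mpr (Ne.symm hm)⟩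

end

theorem stmt9_general (r g : ℕ) (hg : 2 ≤ g) (S : Finset (CKV r g)) :
    CKMaxIndep S ↔
      S = VA r g ∨
      (∃ f : Fin g → Fin r, S = Sf f) ∨
      (∃ (k : Fin g) (v : Fin r),
        S = {Sum.inl (k, 0), Sum.inl (k, 1), Sum.inr (k, v)}) := by
  refine ⟨fun hS => ?_, ?_⟩
  · by_cases hB : ∃ x, Sum.inr x ∈ S
    · obtain ⟨⟨k, v⟩, hkv⟩ := hB
      by_cases hA : ∃ x, Sum.inl x ∈ S
      · obtain ⟨⟨l, a⟩, hla⟩ := hA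
        exact Or.inr (Or.inr ⟨k, v, eq_triple_of_ckMaxIndep hS hla hkv⟩)
      · exact Or.inr (Or.inl (exists_eq_Sf_of_ckMaxIndep hS (not_exists.mp hA) v))
    · exact Or.inl (eq_VA_of_ckMaxIndep hS (not_exists.mp hB))
  · rintro (rfl | ⟨f, rfl⟩ | ⟨k, v, rfl⟩)
    · exact ckMaxIndep_VA hg
    · exact ckMaxIndep_Sf hg f
    · exact ckMaxIndep_triple k v

theorem stmt9 (r g : ℕ) (hr : 1 ≤ r) (hg : 2 ≤ g) (S : Finset (CKV r g)) :
    CKMaxIndep S ↔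
      S = VA r g ∨
      (∃ f : Fin g → Fin r, S = Sf f) ∨
      (∃ (k : Fin g) (v : Fin r),
        S = {Sum.inl (k, 0), Sum.inl (k, 1), Sum.inr (k, v)}) :=
  stmt9_general r g hg S
end
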